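/- arXiv:1402.1654 — 2 statements merged into one kernel-verified Lean document; each statement's English description precedes it below -/
import Mathlib

section
/- Let Ω > 0 be irrational and ω = (1, Ω). Define γ_k = |⟨k, ω⟩| · |k|_1 for k ∈ ℤ² \ {0}, γ* = liminf_{|k|→∞} γ_k, and ν* = liminf_{q→∞} q·‖qΩ‖. Then ν* = γ*/(1 + Ω). -/
open Filter Matrix

/-- The Gauss map. -/
noncomputable def gaussMap (x : ℝ) : ℝ := Int.fract (1 / x)

/-- `cfa Ω n` is the `(n+1)`-st partial quotient `a_{n+1}` of the continued fraction of `Ω`. -/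
noncomputable def cfa (Ω : ℝ) (n : ℕ) : ℤ := ⌊1 / (gaussMap^[n] (Int.fract Ω))⌋

/-- `cfq Ω (n+1)` is the convergent denominator `q_n`; `cfq Ω 0 = q_{-1} = 0`. -/
noncomputable def cfq (Ω : ℝ) : ℕ → ℤ
  | 0 => 0
  | 1 => 1
  | n + 2 => cfa Ω n * cfq Ω (n + 1) + cfq Ω n

/-- `cfp Ω (n+1)` is the convergent numerator `p_n` of `Int.fract Ω`; `cfp Ω 0 = p_{-1} = 1`. -/
noncomputable def cfp (Ω : ℝ) : ℕ → ℤ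
  | 0 => 1
  | 1 => 0
  | n + 2 => cfa Ω n * cfp Ω (n + 1) + cfp Ω n

/-- `cfnum Ω (n+1)` is the numerator `p_n` of the `n`-th convergent of `Ω` itself. -/
noncomputable def cfnum (Ω : ℝ) (n : ℕ) : ℤ := cfp Ω n + cfq Ω n * ⌊Ω⌋

/-- Distance from `x` to the nearest integer. -/
noncomputable def nearestDist (x : ℝ) : ℝ := |x - round x|

/-- `nu Ω q = q · ‖qΩ‖`. -/
noncomputable def nu (Ω q : ℝ) : ℝ := q * nearestDist (q * Ω)

/-- Value of the finite continued fraction `[b_1, ..., b_k] = 1/(b_1 + 1/(b_2 + ⋯ + 1/b_k))`. -/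
noncomputable def finCF : List ℤ → ℝ
  | [] => 0
  | b :: l => 1 / ((b : ℝ) + finCF l)

/-!
The maps `q ↦ (-round (qΩ), q)` and `k ↦ |k₂|` carry near-minimizers of one sequence to
near-minimizers of the other, with quadratic errors:
`γ_(-round (qΩ), q) ≤ (1 + Ω) q‖qΩ‖ + ‖qΩ‖²` and `(1 + Ω) |k₂| ‖|k₂|Ω‖ ≤ γ_k + ⟨k, ω⟩²`.
Along a sequence on which `q‖qΩ‖` (resp. `γ_k`) stays bounded, `‖qΩ‖ ≤ ν/q` (resp.
`|⟨k, ω⟩| ≤ γ_k / |k|₁`) tends to zero, so the errors vanish in the limit. Dirichlet's theorem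
makes both liminfs finite.
-/

open Topology

section LiminfComparison

variable {α β : Type*} {la : Filter α} {lb : Filter β}

theorem frequently_of_tendsto_inf_principal {f : α → β} {s : Set α} {p : β → Prop}
    (hs : ∃ᶠ x in la, x ∈ s) (hf : Tendsto f (la ⊓ 𝓟 s) lb) (hp : ∀ᶠ x in la ⊓ 𝓟 s, p (f x)) :
    ∃ᶠ y in lb, p y :=
  haveI := frequently_mem_iff_neBot.1 hs
  hf.frequently hp.frequently

theorem liminf_le_mul_liminf_of_frequently_lt {u : α → ℝ} {v : β → ℝ} {r : ℝ}
    (hv : IsBoundedUnder (· ≥ ·) lb v) (hu : IsCoboundedUnder (· ≥ ·) la u) (hr : 0 ≤ r)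
    (h : ∀ c ε, 0 < ε → (∃ᶠ a in la, u a < c) → ∃ᶠ b in lb, v b < r * c + ε) :
    liminf v lb ≤ r * liminf u la := by
  refine le_of_forall_pos_le_add fun ε hε => ?_
  have hδ : 0 < ε / (r + 1) := by positivity
  have hu' : ∃ᶠ a in la, u a < liminf u la + ε / (r + 1) :=
    frequently_lt_of_liminf_lt hu (lt_add_of_pos_right _ hδ)
  have hsplit : r * (liminf u la + ε / (r + 1)) + ε / (r + 1) = r * liminf u la + ε := by
    field_simp
    ring
  exact liminf_le_of_frequently_le ((h _ _ hδ hu').mono fun b hb => hsplit ▸ hb.le) hv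

end LiminfComparison

section Lattice

theorem natAbs_cast_eq_abs (n : ℤ) : ((n.natAbs : ℕ) : ℝ) = |(n : ℝ)| := by
  rw [Nat.cast_natAbs, Int.cast_abs]

variable (Ω : ℝ)

/-- `⟨k, ω⟩` for `ω = (1, Ω)`. -/
def pairing (k : ℤ × ℤ) : ℝ := k.1 + k.2 * Ω

def l1Norm (k : ℤ × ℤ) : ℝ := |(k.1 : ℝ)| + |(k.2 : ℝ)|

def gammaK (k : ℤ × ℤ) : ℝ := |pairing Ω k| * l1Norm k

theorem one_le_l1Norm {k : ℤ × ℤ} (hk : k ≠ 0) : 1 ≤ l1Norm k := by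
  unfold l1Norm
  rcases eq_or_ne k.1 0 with h1 | h1
  · have h2 : k.2 ≠ 0 := fun h2 => hk (Prod.ext h1 h2)
    have : (1 : ℝ) ≤ |(k.2 : ℝ)| := by exact_mod_cast Int.one_le_abs h2
    linarith [abs_nonneg (k.1 : ℝ)]
  · have : (1 : ℝ) ≤ |(k.1 : ℝ)| := by exact_mod_cast Int.one_le_abs h1
    linarith [abs_nonneg (k.2 : ℝ)]

theorem tendsto_l1Norm_cofinite : Tendsto l1Norm cofinite atTop := by
  refine tendsto_atTop_mono (fun k => ?_)
    (cocompact_eq_cofinite (ℤ × ℤ) ▸ tendsto_norm_cocompact_atTop)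
  rw [Prod.norm_def, Int.norm_eq_abs, Int.norm_eq_abs]
  exact max_le_iff.2 ⟨le_add_of_nonneg_right (abs_nonneg _), le_add_of_nonneg_left (abs_nonneg _)⟩

theorem gammaK_nonneg (k : ℤ × ℤ) : 0 ≤ gammaK Ω k :=
  mul_nonneg (abs_nonneg _) (add_nonneg (abs_nonneg _) (abs_nonneg _))

theorem abs_pairing_le_gammaK (k : ℤ × ℤ) : |pairing Ω k| ≤ gammaK Ω k := by
  rcases eq_or_ne k 0 with rfl | hk
  · simp [gammaK, pairing]
  · exact le_mul_of_one_le_right (abs_nonneg _) (one_le_l1Norm hk)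

variable {Ω}

theorem abs_snd_mul_le (hΩ : 0 ≤ Ω) (k : ℤ × ℤ) :
    |(k.2 : ℝ)| * Ω ≤ |pairing Ω k| + |(k.1 : ℝ)| := by
  have h := abs_sub (pairing Ω k) k.1
  rwa [pairing, add_sub_cancel_left, abs_mul, abs_of_nonneg hΩ] at h

theorem l1Norm_le (hΩ : 0 ≤ Ω) (k : ℤ × ℤ) :
    l1Norm k ≤ |pairing Ω k| + |(k.2 : ℝ)| * (1 + Ω) := by
  have h := abs_sub (pairing Ω k) (k.2 * Ω)
  rw [pairing, add_sub_cancel_right, abs_mul, abs_of_nonneg hΩ] at h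
  rw [l1Norm, pairing]
  linarith

theorem tendsto_natAbs_snd (hΩ : 0 ≤ Ω) (c : ℝ) :
    Tendsto (fun k : ℤ × ℤ => k.2.natAbs) (cofinite ⊓ 𝓟 {k | |pairing Ω k| < c}) atTop := by
  refine tendsto_atTop.2 fun M => ?_
  have hl := (tendsto_l1Norm_cofinite.eventually_ge_atTop (c + M * (1 + Ω))).filter_mono
    (inf_le_left (b := 𝓟 {k | |pairing Ω k| < c}))
  filter_upwards [hl, mem_inf_of_right (mem_principal_self _)] with k hk hc
  have hb := l1Norm_le hΩ k
  have hM : (M : ℝ) * (1 + Ω) < |(k.2 : ℝ)| * (1 + Ω) := by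
    linarith [show |pairing Ω k| < c from hc]
  have := lt_of_mul_lt_mul_right hM (by linarith)
  rw [← natAbs_cast_eq_abs] at this
  exact_mod_cast this.le

theorem tendsto_abs_pairing (c : ℝ) :
    Tendsto (fun k => |pairing Ω k|) (cofinite ⊓ 𝓟 {k | gammaK Ω k < c}) (𝓝 0) := by
  have hl := tendsto_l1Norm_cofinite.mono_left (inf_le_left (b := 𝓟 {k | gammaK Ω k < c}))
  refine tendsto_of_tendsto_of_tendsto_of_le_of_le' tendsto_const_nhds
    ((tendsto_const_nhds (x := c)).div_atTop hl) (Eventually.of_forall fun k => abs_nonneg _) ?_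
  filter_upwards [hl.eventually_gt_atTop 0, mem_inf_of_right (mem_principal_self _)] with k hk hc
  rw [le_div_iff₀ hk]
  exact hc.le

end Lattice

section Approximation

variable {Ω : ℝ}

theorem nu_natCast_nonneg (Ω : ℝ) (q : ℕ) : 0 ≤ nu Ω q :=
  mul_nonneg q.cast_nonneg (abs_nonneg _)

theorem nearestDist_natAbs_mul_le (k : ℤ × ℤ) :
    nearestDist (k.2.natAbs * Ω) ≤ |pairing Ω k| := by
  rw [natAbs_cast_eq_abs]
  rcases abs_choice (k.2 : ℝ) with h | h <;> rw [h]
  · calc nearestDist (k.2 * Ω) ≤ |k.2 * Ω - ((-k.1 : ℤ) : ℝ)| := round_le _ _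
      _ = |pairing Ω k| := by rw [pairing]; push_cast; ring_nf
  · calc nearestDist (-k.2 * Ω) ≤ |-k.2 * Ω - k.1| := round_le _ _
      _ = |pairing Ω k| := by rw [pairing, ← abs_neg]; ring_nf

theorem nu_natAbs_le (k : ℤ × ℤ) : nu Ω k.2.natAbs ≤ k.2.natAbs * |pairing Ω k| :=
  mul_le_mul_of_nonneg_left (nearestDist_natAbs_mul_le k) (Nat.cast_nonneg _)

theorem nu_natAbs_mul_le_gammaK (hΩ : 0 ≤ Ω) (k : ℤ × ℤ) :
    nu Ω k.2.natAbs * (1 + Ω) ≤ gammaK Ω k + |pairing Ω k| ^ 2 := by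
  have hsnd := abs_snd_mul_le hΩ k
  calc nu Ω k.2.natAbs * (1 + Ω) ≤ k.2.natAbs * |pairing Ω k| * (1 + Ω) :=
        mul_le_mul_of_nonneg_right (nu_natAbs_le k) (by linarith)
    _ = |pairing Ω k| * (|(k.2 : ℝ)| + |(k.2 : ℝ)| * Ω) := by rw [natAbs_cast_eq_abs]; ring
    _ ≤ |pairing Ω k| * (|(k.2 : ℝ)| + (|pairing Ω k| + |(k.1 : ℝ)|)) :=
        mul_le_mul_of_nonneg_left (by linarith) (abs_nonneg _)
    _ = gammaK Ω k + |pairing Ω k| ^ 2 := by rw [gammaK, l1Norm]; ring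

theorem gammaK_round_le (hΩ : 0 ≤ Ω) (q : ℕ) :
    gammaK Ω (-round ((q : ℝ) * Ω), q) ≤ nu Ω q * (1 + Ω) + nearestDist (q * Ω) ^ 2 := by
  set x := (q : ℝ) * Ω with hx
  have hpair : pairing Ω (-round x, q) = x - round x := by
    rw [pairing, hx]; push_cast; ring
  have hround : |((round x : ℤ) : ℝ)| ≤ x + nearestDist x := by
    have h := abs_sub x (x - round x)
    rwa [sub_sub_cancel, abs_of_nonneg (by positivity : 0 ≤ x)] at h
  calc gammaK Ω (-round x, q) = nearestDist x * (|((round x : ℤ) : ℝ)| + q) := by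
        rw [gammaK, hpair, l1Norm, ← nearestDist]; push_cast; rw [abs_neg, Nat.abs_cast]
    _ ≤ nearestDist x * (x + nearestDist x + q) :=
        mul_le_mul_of_nonneg_left (by linarith) (abs_nonneg _)
    _ = nu Ω q * (1 + Ω) + nearestDist x ^ 2 := by rw [nu, hx]; ring

theorem tendsto_nearestDist_of_nu_lt (c : ℝ) :
    Tendsto (fun q : ℕ => nearestDist ((q : ℝ) * Ω)) (atTop ⊓ 𝓟 {q | nu Ω q < c}) (𝓝 0) := by
  have hl := (tendsto_natCast_atTop_atTop (R := ℝ)).mono_left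
    (inf_le_left (b := 𝓟 {q : ℕ | nu Ω q < c}))
  refine tendsto_of_tendsto_of_tendsto_of_le_of_le' tendsto_const_nhds
    ((tendsto_const_nhds (x := c)).div_atTop hl) (Eventually.of_forall fun q => abs_nonneg _) ?_
  filter_upwards [hl.eventually_gt_atTop 0, mem_inf_of_right (mem_principal_self _)] with q hq hc
  rw [le_div_iff₀ hq, mul_comm]
  exact le_of_lt hc

theorem pairing_neg_num_den (r : ℚ) : pairing Ω (-r.num, r.den) = r.den * (Ω - r) := by
  rw [pairing, Rat.cast_def]
  push_cast
  field_simp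
  ring

theorem frequently_nu_lt_one (hirr : Irrational Ω) (hΩ : 0 ≤ Ω) :
    ∃ᶠ q in atTop, nu Ω (q : ℕ) < 1 := by
  set K := (fun r : ℚ => ((-r.num, (r.den : ℤ)) : ℤ × ℤ)) ''
    {r : ℚ | |Ω - r| < 1 / (r.den : ℝ) ^ 2}
  have hinj : Function.Injective fun r : ℚ => ((-r.num, (r.den : ℤ)) : ℤ × ℤ) := fun r s h =>
    Rat.ext (neg_injective (congrArg Prod.fst h)) (Nat.cast_injective (congrArg Prod.snd h))
  have hK : ∃ᶠ k in cofinite, k ∈ K := frequently_cofinite_iff_infinite.2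
    ((Real.infinite_rat_abs_sub_lt_one_div_den_sq_of_irrational hirr).image hinj.injOn)
  have hsmall : ∀ k ∈ K, 1 ≤ (k.2.natAbs : ℝ) ∧ (k.2.natAbs : ℝ) * |pairing Ω k| < 1 := by
    rintro _ ⟨r, hr, rfl⟩
    have hden : (1 : ℝ) ≤ r.den := by exact_mod_cast r.pos
    rw [pairing_neg_num_den, abs_mul, Nat.abs_cast, Int.natAbs_natCast, ← mul_assoc]
    refine ⟨hden, ?_⟩
    calc (r.den : ℝ) * r.den * |Ω - r| < r.den * r.den * (1 / (r.den : ℝ) ^ 2) :=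
          mul_lt_mul_of_pos_left hr (by positivity)
      _ = 1 := by field_simp
  have hpair : K ⊆ {k | |pairing Ω k| < 1} := fun k hk =>
    (le_mul_of_one_le_left (abs_nonneg _) (hsmall k hk).1).trans_lt (hsmall k hk).2
  refine frequently_of_tendsto_inf_principal hK
    ((tendsto_natAbs_snd hΩ 1).mono_left (inf_le_inf_left _ (principal_mono.2 hpair))) ?_
  filter_upwards [mem_inf_of_right (mem_principal_self K)] with k hk
  exact (nu_natAbs_le k).trans_lt (hsmall k hk).2

end Approximation

section Transfer

variable {Ω : ℝ}

theorem frequently_gammaK_lt_of_frequently_nu_lt (hΩ : 0 ≤ Ω) (c ε : ℝ) (hε : 0 < ε)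
    (hfreq : ∃ᶠ q in atTop, nu Ω (q : ℕ) < c) :
    ∃ᶠ k in cofinite, gammaK Ω k < (1 + Ω) * c + ε := by
  have hinj : Function.Injective fun q : ℕ => ((-round ((q : ℝ) * Ω), (q : ℤ)) : ℤ × ℤ) :=
    fun a b h => Nat.cast_injective (congrArg Prod.snd h)
  have hφ : Tendsto (fun q : ℕ => ((-round ((q : ℝ) * Ω), (q : ℤ)) : ℤ × ℤ))
      (atTop ⊓ 𝓟 {q : ℕ | nu Ω q < c}) cofinite :=
    hinj.tendsto_cofinite.mono_left (inf_le_left.trans atTop_le_cofinite)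
  have hd : ∀ᶠ q : ℕ in atTop ⊓ 𝓟 {q : ℕ | nu Ω q < c}, nearestDist ((q : ℝ) * Ω) ^ 2 < ε := by
    have h := (tendsto_nearestDist_of_nu_lt (Ω := Ω) c).pow 2
    rw [zero_pow two_ne_zero] at h
    exact h.eventually (gt_mem_nhds hε)
  refine frequently_of_tendsto_inf_principal hfreq hφ ?_
  filter_upwards [hd, mem_inf_of_right (mem_principal_self _)] with q hq hc
  have hνc := mul_lt_mul_of_pos_right (show nu Ω q < c from hc) (by linarith : 0 < 1 + Ω)
  linarith [gammaK_round_le hΩ q]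

theorem frequently_nu_lt_of_frequently_gammaK_lt (hΩ : 0 ≤ Ω) (c ε : ℝ) (hε : 0 < ε)
    (hfreq : ∃ᶠ k in cofinite, gammaK Ω k < c) :
    ∃ᶠ q in atTop, nu Ω (q : ℕ) < (1 + Ω)⁻¹ * c + ε := by
  have hω : 0 < 1 + Ω := by linarith
  have hψ : Tendsto (fun k : ℤ × ℤ => k.2.natAbs) (cofinite ⊓ 𝓟 {k | gammaK Ω k < c}) atTop :=
    (tendsto_natAbs_snd hΩ c).mono_left (inf_le_inf_left _
      (principal_mono.2 fun k hk => (abs_pairing_le_gammaK Ω k).trans_lt hk))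
  have he : ∀ᶠ k in cofinite ⊓ 𝓟 {k | gammaK Ω k < c}, |pairing Ω k| ^ 2 < ε * (1 + Ω) := by
    have h := (tendsto_abs_pairing (Ω := Ω) c).pow 2
    rw [zero_pow two_ne_zero] at h
    exact h.eventually (gt_mem_nhds (by positivity))
  refine frequently_of_tendsto_inf_principal hfreq hψ ?_
  filter_upwards [he, mem_inf_of_right (mem_principal_self _)] with k hk hc
  refine lt_of_mul_lt_mul_right ?_ hω.le
  rw [add_mul, mul_comm (1 + Ω)⁻¹, mul_assoc, inv_mul_cancel₀ hω.ne', mul_one]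
  linarith [nu_natAbs_mul_le_gammaK hΩ k, show gammaK Ω k < c from hc]

end Transfer

/-- With `γ_k = |⟨k,ω⟩|·|k|₁`, `γ* = liminf_{|k|→∞} γ_k` and
`ν* = liminf_{q→∞} q·‖qΩ‖`, one has `ν* = γ*/(1 + Ω)`. -/
theorem stmt_8 (Ω : ℝ) (hΩ : Irrational Ω) (hpos : 0 < Ω) :
    Filter.liminf (fun q : ℕ => nu Ω (q : ℝ)) Filter.atTop
      = Filter.liminf
          (fun k : ℤ × ℤ => |(k.1 : ℝ) + (k.2 : ℝ) * Ω| * (|(k.1 : ℝ)| + |(k.2 : ℝ)|))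
          Filter.cofinite / (1 + Ω) := by
  change _ = liminf (gammaK Ω) cofinite / (1 + Ω)
  have hω : 0 < 1 + Ω := by linarith
  have hA := frequently_gammaK_lt_of_frequently_nu_lt hpos.le
  have hB := frequently_nu_lt_of_frequently_gammaK_lt hpos.le
  have hDirichlet := frequently_nu_lt_one hΩ hpos.le
  have hνco : IsCoboundedUnder (· ≥ ·) atTop fun q : ℕ => nu Ω q :=
    .of_frequently_le (hDirichlet.mono fun _ h => h.le)
  have hγco : IsCoboundedUnder (· ≥ ·) cofinite (gammaK Ω) :=
    .of_frequently_le ((hA 1 1 one_pos hDirichlet).mono fun _ h => h.le)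
  have hL := liminf_le_mul_liminf_of_frequently_lt (isBoundedUnder_of ⟨0, gammaK_nonneg Ω⟩)
    hνco hω.le hA
  have hN := liminf_le_mul_liminf_of_frequently_lt (isBoundedUnder_of ⟨0, nu_natCast_nonneg Ω⟩)
    hγco (inv_nonneg.2 hω.le) hB
  rw [eq_div_iff hω.ne']
  linarith [(le_inv_mul_iff₀ hω).1 hN]
end

section
/- Let Ω = 2·∑_{k=1}^∞ 2^{−2^k}. Then Ω is irrational and is a number of constant type: all partial quotients of its continued fraction expansion are 1 or 2. -/
/-!
Positivity of all the signed errors `(-1)^(n+1) (q_{n-1} Ω - p_{n-1})` of a candidate sequence of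
partial quotients identifies it as the continued fraction of `Ω` and makes `Ω` irrational; for the
indices up to `N` it follows from the single inequality `|q_N Ω - p_N| q_N < 1`. Shallit's words
are built by folding, so the `m`-th one evaluates to the sum of the first `m + 3` terms of the
series, with denominator `q` satisfying `2 q² = 2^(2^(m+4)-1)`; the tail of the series is below
`1/q²`.
-/

open Matrix

namespace Shallit

section Convergents

variable (a : ℕ → ℤ)

/-- `convDen a (n + 1)` and `convNum a (n + 1)` are the `q_n` and `p_n` of `[0; a 0, a 1, …]`,
with the same index shift as `cfq` and `cfp`. -/
def convDen : ℕ → ℤ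
  | 0 => 0
  | 1 => 1
  | n + 2 => a n * convDen (n + 1) + convDen n

def convNum : ℕ → ℤ
  | 0 => 1
  | 1 => 0
  | n + 2 => a n * convNum (n + 1) + convNum n

/-- This is `|q_{n-1} x - p_{n-1}|` when `a` is the continued fraction of `x`. -/
noncomputable def convError (x : ℝ) (n : ℕ) : ℝ :=
  (-1) ^ (n + 1) * (convDen a n * x - convNum a n)

variable {a}

lemma convError_zero (x : ℝ) : convError a x 0 = 1 := by
  simp [convError, convDen, convNum]

lemma convError_one (x : ℝ) : convError a x 1 = x := by
  simp [convError, convDen, convNum]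

lemma convError_add_two (x : ℝ) (n : ℕ) :
    convError a x (n + 2) = convError a x n - a n * convError a x (n + 1) := by
  simp only [convError, convDen, convNum]
  push_cast
  ring

lemma convDen_mul_convNum_succ_sub (n : ℕ) :
    convDen a n * convNum a (n + 1) - convNum a n * convDen a (n + 1) = (-1) ^ (n + 1) := by
  induction n with
  | zero => simp [convDen, convNum]
  | succ n ih =>
    simp only [convDen, convNum]
    linear_combination (-1 : ℤ) * ih

lemma convDen_nonneg_and_le_succ (ha : ∀ n, 1 ≤ a n) (n : ℕ) :
    0 ≤ convDen a n ∧ convDen a n ≤ convDen a (n + 1) := by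
  induction n with
  | zero => simp [convDen]
  | succ n ih =>
    refine ⟨ih.1.trans ih.2, ?_⟩
    simp only [convDen]
    nlinarith [ha n]

lemma convDen_mono (ha : ∀ n, 1 ≤ a n) : Monotone (convDen a) :=
  monotone_nat_of_le_succ fun n => (convDen_nonneg_and_le_succ ha n).2

lemma one_le_convDen_succ (ha : ∀ n, 1 ≤ a n) (n : ℕ) : 1 ≤ convDen a (n + 1) :=
  convDen_mono ha (Nat.succ_le_succ (Nat.zero_le n))

/-- The cross determinants `(-1)^(n+1) (q n · p N - p n · q N)`, `N ≥ n`, satisfy the continuant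
recursion in `N` with initial values `0, 1`. -/
lemma one_le_cross (ha : ∀ n, 1 ≤ a n) {n N : ℕ} (hn : n ≤ N) :
    1 ≤ (-1) ^ (n + 1) * (convDen a n * convNum a (N + 1) - convNum a n * convDen a (N + 1)) := by
  set X : ℕ → ℤ := fun M =>
    (-1) ^ (n + 1) * (convDen a n * convNum a M - convNum a n * convDen a M)
  have hX : ∀ k, 0 ≤ X (n + k) ∧ 1 ≤ X (n + k + 1) := by
    intro k
    induction k with
    | zero =>
      refine ⟨by simp [X, mul_comm], ?_⟩
      simp only [X, add_zero, convDen_mul_convNum_succ_sub, ← pow_add]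
      exact (Even.add_self _).neg_one_pow.ge
    | succ k ih =>
      have hrec : X (n + k + 2) = a (n + k) * X (n + k + 1) + X (n + k) := by
        simp only [X, convDen, convNum]
        ring
      refine ⟨zero_le_one.trans ih.2, ?_⟩
      rw [← add_assoc, hrec]
      nlinarith [ha (n + k)]
  obtain ⟨k, rfl⟩ := Nat.exists_eq_add_of_le hn
  exact (hX k).2

variable {x : ℝ}

/-- `convError a x n · q_N` is the cross determinant of `one_le_cross` plus an error of absolute
value at most `q_{n-1} · |q_N x - p_N| < 1`. -/
theorem convError_pos_of_approx (ha : ∀ n, 1 ≤ a n) {n N : ℕ} (hn : n ≤ N)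
    (happrox : |convDen a (N + 1) * x - convNum a (N + 1)| * convDen a (N + 1) < 1) :
    0 < convError a x n := by
  have hcross : (1 : ℝ) ≤ (-1) ^ (n + 1) *
      (convDen a n * convNum a (N + 1) - convNum a n * convDen a (N + 1)) := by
    exact_mod_cast one_le_cross ha hn
  have hq : (0 : ℝ) ≤ convDen a n := by exact_mod_cast (convDen_nonneg_and_le_succ ha n).1
  have hqQ : (convDen a n : ℝ) ≤ convDen a (N + 1) := by
    exact_mod_cast convDen_mono ha (hn.trans N.le_succ)
  have hQ : (0 : ℝ) < convDen a (N + 1) := by exact_mod_cast one_le_convDen_succ ha N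
  set Q : ℝ := (convDen a (N + 1) : ℝ)
  set P : ℝ := (convNum a (N + 1) : ℝ)
  set q : ℝ := (convDen a n : ℝ)
  set s : ℝ := (-1) ^ (n + 1)
  have hs : |s| = 1 := by simp [s]
  have hsplit : convError a x n * Q = s * (q * P - convNum a n * Q) + s * q * (Q * x - P) := by
    simp only [convError, s, q]
    ring
  have hsmall : |s * q * (Q * x - P)| < 1 :=
    calc |s * q * (Q * x - P)| = q * |Q * x - P| := by
          rw [abs_mul, abs_mul, hs, abs_of_nonneg hq, one_mul]
      _ ≤ |Q * x - P| * Q := by nlinarith [abs_nonneg (Q * x - P)]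
      _ < 1 := happrox
  have hprod : 0 < convError a x n * Q := by
    rw [hsplit]
    linarith [neg_abs_le (s * q * (Q * x - P))]
  exact pos_of_mul_pos_left hprod hQ.le

lemma convError_succ_lt (ha : ∀ n, 1 ≤ a n) (hpos : ∀ n, 0 < convError a x n) (n : ℕ) :
    convError a x (n + 1) < convError a x n := by
  have hrec := convError_add_two (a := a) x n
  have ha' : (1 : ℝ) ≤ a n := by exact_mod_cast ha n
  nlinarith [hpos (n + 1), hpos (n + 2)]

lemma one_div_convError_div {n : ℕ} (hn : convError a x (n + 1) ≠ 0) :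
    1 / (convError a x (n + 1) / convError a x n) =
      a n + convError a x (n + 2) / convError a x (n + 1) := by
  rw [convError_add_two]
  field_simp
  ring

lemma convError_succ_div_mem_Ico (ha : ∀ n, 1 ≤ a n) (hpos : ∀ n, 0 < convError a x n)
    (n : ℕ) : convError a x (n + 1) / convError a x n ∈ Set.Ico 0 1 :=
  ⟨(div_pos (hpos _) (hpos _)).le, (div_lt_one (hpos n)).mpr (convError_succ_lt ha hpos n)⟩

lemma gaussMap_iterate_fract (ha : ∀ n, 1 ≤ a n) (hpos : ∀ n, 0 < convError a x n) (n : ℕ) :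
    gaussMap^[n] (Int.fract x) = convError a x (n + 1) / convError a x n := by
  have hratio k := Int.fract_eq_self.mpr (convError_succ_div_mem_Ico ha hpos k)
  induction n with
  | zero => simpa [convError_zero, convError_one] using hratio 0
  | succ n ih =>
    rw [Function.iterate_succ_apply', ih, gaussMap, one_div_convError_div (hpos (n + 1)).ne',
      Int.fract_intCast_add, hratio]

theorem cfa_eq_of_convError_pos (ha : ∀ n, 1 ≤ a n) (hpos : ∀ n, 0 < convError a x n)
    (n : ℕ) : cfa x n = a n := by
  rw [cfa, gaussMap_iterate_fract ha hpos, one_div_convError_div (hpos (n + 1)).ne',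
    Int.floor_intCast_add, add_eq_left, Int.floor_eq_zero_iff]
  exact convError_succ_div_mem_Ico ha hpos (n + 1)

/-- For `x = r / d`, the numbers `d · convError a x n` are positive integers, and they strictly
decrease. -/
theorem irrational_of_convError_pos (ha : ∀ n, 1 ≤ a n) (hpos : ∀ n, 0 < convError a x n) :
    Irrational x := by
  rintro ⟨r, rfl⟩
  have hd : (0 : ℝ) < r.den := by exact_mod_cast r.den_pos
  set z : ℕ → ℤ := fun n => (-1) ^ (n + 1) * (convDen a n * r.num - convNum a n * r.den)
  have hz : ∀ n, (z n : ℝ) = r.den * convError a r n := by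
    intro n
    simp only [z, convError, Rat.cast_def]
    push_cast
    field_simp
  have hz_pos : ∀ n, 0 < z n := fun n => by
    have : (0 : ℝ) < z n := by rw [hz]; exact mul_pos hd (hpos n)
    exact_mod_cast this
  have hz_lt : ∀ n, z (n + 1) < z n := fun n => by
    have : (z (n + 1) : ℝ) < z n := by
      rw [hz, hz]
      exact mul_lt_mul_of_pos_left (convError_succ_lt ha hpos n) hd
    exact_mod_cast this
  have hz_le : ∀ n, z n + n ≤ r.den := fun n => by
    induction n with
    | zero => simp [z, convDen, convNum]
    | succ n ih => push_cast; linarith [hz_lt n]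
  linarith [hz_le r.den, hz_pos r.den]

end Convergents

def quotMat (b : ℤ) : Matrix (Fin 2) (Fin 2) ℤ := !![b, 1; 1, 0]

def wordMat (w : List ℤ) : Matrix (Fin 2) (Fin 2) ℤ := (w.map quotMat).prod

lemma wordMat_append (v w : List ℤ) : wordMat (v ++ w) = wordMat v * wordMat w := by
  simp [wordMat]

lemma wordMat_reverse (w : List ℤ) : wordMat w.reverse = (wordMat w)ᵀ := by
  induction w with
  | nil => simp [wordMat]
  | cons b w ih =>
    have hb : (quotMat b)ᵀ = quotMat b := by
      simp [quotMat, ← Matrix.ext_iff, Fin.forall_fin_two]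
    rw [List.reverse_cons, wordMat_append, ih]
    simp [wordMat, Matrix.transpose_mul, hb]

lemma det_wordMat (w : List ℤ) : (wordMat w).det = (-1) ^ w.length := by
  induction w with
  | nil => simp [wordMat]
  | cons b w ih =>
    rw [← List.singleton_append, wordMat_append, Matrix.det_mul, ih]
    simp [wordMat, quotMat, Matrix.det_fin_two_of, pow_succ]

lemma wordMat_map_range (a : ℕ → ℤ) (n : ℕ) : wordMat ((List.range n).map a) =
    !![convDen a (n + 1), convDen a n; convNum a (n + 1), convNum a n] := by
  induction n with
  | zero => simp [wordMat, convDen, convNum, Matrix.one_fin_two]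
  | succ n ih =>
    rw [List.range_succ, List.map_append, wordMat_append, ih]
    simp [wordMat, quotMat, convDen, convNum, mul_comm]

/-- The folding lemma: `[0; w, 1, 1, 1, 2, w⁻] = [0; w, 1, 1] + 1 / (2 q²)`, where `q` is the
denominator of `[0; w, 1, 1]`. -/
theorem wordMat_fold {w : List ℤ} (hw : Even w.length) :
    wordMat (w ++ [1, 1, 1, 2] ++ w.reverse) 0 0 = 2 * wordMat (w ++ [1, 1]) 0 0 ^ 2 ∧
    wordMat (w ++ [1, 1, 1, 2] ++ w.reverse) 1 0 =
      2 * wordMat (w ++ [1, 1]) 0 0 * wordMat (w ++ [1, 1]) 1 0 + 1 := by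
  have hdet : (wordMat w).det = 1 := by rw [det_wordMat, hw.neg_one_pow]
  have hD : wordMat [1, 1, 1, 2] = !![8, 3; 5, 2] := by
    simp [wordMat, quotMat, Matrix.one_fin_two]
  have hE : wordMat [1, 1] = !![2, 1; 1, 1] := by
    simp [wordMat, quotMat, Matrix.one_fin_two]
  simp only [wordMat_append, wordMat_reverse, hD, hE]
  generalize wordMat w = A at hdet ⊢
  rw [Matrix.eta_fin_two A, Matrix.det_fin_two_of] at *
  simp only [Matrix.mul_apply, Fin.sum_univ_two, Matrix.transpose_apply, Matrix.of_apply,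
    Matrix.cons_val_zero, Matrix.cons_val_one]
  constructor
  · ring
  · linear_combination hdet

def coreWord : ℕ → List ℤ
  | 0 => [1, 2, 1, 1, 1, 1]
  | m + 1 => coreWord m ++ [1, 1, 1, 2] ++ (coreWord m).reverse

/-- `[0; shallitWord m]` is the partial sum `2 ∑_{k < m + 3} 2^(-2^(k+1))`. -/
def shallitWord (m : ℕ) : List ℤ := [1, 1] ++ coreWord m ++ [1, 1]

lemma even_length_coreWord (m : ℕ) : Even (coreWord m).length := by
  induction m with
  | zero => decide
  | succ m ih =>
    simp only [coreWord, List.length_append, List.length_reverse]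
    exact (ih.add (by decide)).add ih

lemma lt_length_coreWord (m : ℕ) : m < (coreWord m).length := by
  induction m with
  | zero => decide
  | succ m ih =>
    simp only [coreWord, List.length_append, List.length_reverse, List.length_cons,
      List.length_nil]
    omega

lemma mem_coreWord {m : ℕ} {b : ℤ} (hb : b ∈ coreWord m) : b = 1 ∨ b = 2 := by
  induction m with
  | zero => simpa [coreWord, or_comm] using hb
  | succ m ih =>
    simp only [coreWord, List.mem_append, List.mem_reverse] at hb
    rcases hb with (hb | hb) | hb
    · exact ih hb
    · simpa [or_comm] using hb
    · exact ih hb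

lemma shallitWord_succ (m : ℕ) :
    shallitWord (m + 1) = shallitWord m ++ ([1, 2] ++ (coreWord m).reverse ++ [1, 1]) := by
  simp [shallitWord, coreWord]

lemma shallitWord_prefix {m m' : ℕ} (h : m ≤ m') : shallitWord m <+: shallitWord m' := by
  induction h with
  | refl => exact List.prefix_rfl
  | step _ ih => exact ih.trans (shallitWord_succ _ ▸ List.prefix_append _ _)

lemma lt_length_shallitWord (m : ℕ) : m < (shallitWord m).length := by
  simp only [shallitWord, List.length_append, List.length_cons, List.length_nil]
  have := lt_length_coreWord m
  omega

/-- Each `shallitWord m` is a prefix of the next and longer than `m`, so the default `1` is never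
used. -/
def shallitSeq (n : ℕ) : ℤ := (shallitWord n).getD n 1

lemma shallitWord_eq_map_range (m : ℕ) :
    shallitWord m = (List.range (shallitWord m).length).map shallitSeq := by
  refine List.ext_getElem (by simp) fun i hi _ => ?_
  have hi' := lt_length_shallitWord i
  simp only [List.getElem_map, List.getElem_range, shallitSeq, List.getD_eq_getElem _ _ hi']
  rcases le_total i m with h | h
  · exact ((shallitWord_prefix h).getElem hi').symm
  · exact (shallitWord_prefix h).getElem hi

lemma shallitSeq_mem (n : ℕ) : shallitSeq n = 1 ∨ shallitSeq n = 2 := by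
  have hn := lt_length_shallitWord n
  rw [shallitSeq, List.getD_eq_getElem _ _ hn]
  rcases List.mem_append.mp (List.getElem_mem hn) with hb | hb
  · rcases List.mem_append.mp hb with hb | hb
    · exact .inl (by simpa using hb)
    · exact mem_coreWord hb
  · exact .inl (by simpa using hb)

lemma one_le_shallitSeq (n : ℕ) : 1 ≤ shallitSeq n := by
  rcases shallitSeq_mem n with h | h <;> omega

def shallitDen (m : ℕ) : ℤ := wordMat (shallitWord m) 0 0

def shallitNum (m : ℕ) : ℤ := wordMat (shallitWord m) 1 0

lemma shallitDen_succ_and_shallitNum_succ (m : ℕ) :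
    shallitDen (m + 1) = 2 * shallitDen m ^ 2 ∧
      shallitNum (m + 1) = 2 * shallitDen m * shallitNum m + 1 := by
  have hfold := wordMat_fold (w := [1, 1] ++ coreWord m)
    (by simpa [Nat.even_add_one] using even_length_coreWord m)
  simpa [shallitDen, shallitNum, shallitWord, coreWord] using hfold

lemma shallitDen_eq (m : ℕ) : shallitDen m = convDen shallitSeq ((shallitWord m).length + 1) := by
  conv_lhs => rw [shallitDen, shallitWord_eq_map_range, wordMat_map_range]
  rfl

lemma shallitNum_eq (m : ℕ) : shallitNum m = convNum shallitSeq ((shallitWord m).length + 1) := by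
  conv_lhs => rw [shallitNum, shallitWord_eq_map_range, wordMat_map_range]
  rfl

noncomputable def shallitConst : ℝ := 2 * ∑' k : ℕ, (2 : ℝ) ^ (-(2 ^ (k + 1) : ℤ))

noncomputable def seriesTerm (k : ℕ) : ℝ := 2 * (2 : ℝ) ^ (-(2 ^ (k + 1) : ℤ))

lemma shallitConst_eq_tsum : shallitConst = ∑' k, seriesTerm k := tsum_mul_left.symm

lemma seriesTerm_pos (k : ℕ) : 0 < seriesTerm k := by unfold seriesTerm; positivity

lemma seriesTerm_succ (k : ℕ) : seriesTerm (k + 1) = seriesTerm k ^ 2 / 2 := by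
  have h : (-(2 ^ (k + 1 + 1) : ℤ)) = -(2 ^ (k + 1)) * 2 := by ring
  rw [seriesTerm, seriesTerm, h, _root_.zpow_mul, zpow_two]
  ring

lemma seriesTerm_le_half (k : ℕ) : seriesTerm k ≤ 1 / 2 := by
  induction k with
  | zero => norm_num [seriesTerm]
  | succ k ih => rw [seriesTerm_succ]; nlinarith [seriesTerm_pos k]

lemma seriesTerm_add_le (k j : ℕ) : seriesTerm (k + j) ≤ seriesTerm k * (1 / 4) ^ j := by
  induction j with
  | zero => simp
  | succ j ih =>
    rw [← add_assoc, seriesTerm_succ, pow_succ (1 / 4 : ℝ)]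
    nlinarith [seriesTerm_pos (k + j), seriesTerm_le_half (k + j)]

lemma summable_seriesTerm_add (k : ℕ) : Summable fun j => seriesTerm (j + k) :=
  .of_nonneg_of_le (fun _ => (seriesTerm_pos _).le)
    (fun j => add_comm j k ▸ seriesTerm_add_le k j)
    ((summable_geometric_of_lt_one (by norm_num) (by norm_num)).mul_left _)

lemma summable_seriesTerm : Summable seriesTerm := by simpa using summable_seriesTerm_add 0

lemma tsum_seriesTerm_add_pos (k : ℕ) : 0 < ∑' j, seriesTerm (j + k) :=
  (summable_seriesTerm_add k).tsum_pos (fun _ => (seriesTerm_pos _).le) 0 (seriesTerm_pos _)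

lemma tsum_seriesTerm_add_lt (k : ℕ) : ∑' j, seriesTerm (j + k) < 2 * seriesTerm k :=
  calc ∑' j, seriesTerm (j + k) ≤ ∑' j, seriesTerm k * (1 / 4) ^ j :=
        (summable_seriesTerm_add k).tsum_le_tsum (fun j => add_comm j k ▸ seriesTerm_add_le k j)
          ((summable_geometric_of_lt_one (by norm_num) (by norm_num)).mul_left _)
    _ = seriesTerm k * (4 / 3) := by
        rw [tsum_mul_left, tsum_geometric_of_lt_one (by norm_num) (by norm_num)]
        norm_num
    _ < 2 * seriesTerm k := by linarith [seriesTerm_pos k]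

lemma shallitDen_seriesTerm_and_shallitNum_eq (m : ℕ) :
    2 * (shallitDen m : ℝ) ^ 2 * seriesTerm (m + 3) = 1 ∧
      (shallitNum m : ℝ) = shallitDen m * ∑ k ∈ Finset.range (m + 3), seriesTerm k := by
  induction m with
  | zero =>
    have h : wordMat (shallitWord 0) = !![128, 79; 81, 50] := by
      simp [shallitWord, coreWord, wordMat, quotMat, Matrix.one_fin_two]
    norm_num [shallitDen, shallitNum, h, seriesTerm, Finset.sum_range_succ]
  | succ m ih =>
    obtain ⟨hQ, hP⟩ := shallitDen_succ_and_shallitNum_succ m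
    rw [hQ, hP, Finset.sum_range_succ, show m + 1 + 3 = m + 3 + 1 by ring, seriesTerm_succ]
    push_cast
    constructor
    · linear_combination (2 * (shallitDen m : ℝ) ^ 2 * seriesTerm (m + 3) + 1) * ih.1
    · linear_combination 2 * (shallitDen m : ℝ) * ih.2 - ih.1

theorem shallitConst_approx (m : ℕ) :
    |convDen shallitSeq ((shallitWord m).length + 1) * shallitConst -
        convNum shallitSeq ((shallitWord m).length + 1)| *
      convDen shallitSeq ((shallitWord m).length + 1) < 1 := by
  have hQ : (0 : ℝ) < shallitDen m := by
    rw [shallitDen_eq]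
    exact Int.cast_pos.mpr (one_le_convDen_succ one_le_shallitSeq _)
  obtain ⟨hQt, hPS⟩ := shallitDen_seriesTerm_and_shallitNum_eq m
  rw [← shallitDen_eq, ← shallitNum_eq, hPS, shallitConst_eq_tsum,
    ← summable_seriesTerm.sum_add_tsum_nat_add (m + 3)]
  set Q : ℝ := (shallitDen m : ℝ)
  set S := ∑ k ∈ Finset.range (m + 3), seriesTerm k
  set T := ∑' j, seriesTerm (j + (m + 3))
  have hT : 0 < T := tsum_seriesTerm_add_pos (m + 3)
  calc |Q * (S + T) - Q * S| * Q = Q ^ 2 * T := by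
        rw [show Q * (S + T) - Q * S = Q * T by ring, abs_of_pos (mul_pos hQ hT)]
        ring
    _ < Q ^ 2 * (2 * seriesTerm (m + 3)) := by gcongr; exact tsum_seriesTerm_add_lt (m + 3)
    _ = 1 := by linarith

end Shallit

/-- Shallit's example: `Ω = 2·∑_{k≥1} 2^{-2^k}` is irrational and of
constant type: all partial quotients of its continued fraction are `1` or `2`. -/
theorem stmt_19 :
    let Ω : ℝ := 2 * ∑' k : ℕ, (2 : ℝ) ^ (-(2 ^ (k + 1) : ℤ))
    Irrational Ω ∧ ∀ n : ℕ, cfa Ω n = 1 ∨ cfa Ω n = 2 := by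
  open Shallit in
  have hpos : ∀ n, 0 < convError shallitSeq shallitConst n := fun n =>
    convError_pos_of_approx one_le_shallitSeq (lt_length_shallitWord n).le (shallitConst_approx n)
  exact ⟨irrational_of_convError_pos one_le_shallitSeq hpos,
    fun n => cfa_eq_of_convError_pos one_le_shallitSeq hpos n ▸ shallitSeq_mem n⟩
end
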